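/- If n ≥ 3 and 1 ≤ k ≤ n-1, then every maximizer d of the sequence d ↦ C(k,d)·C(n-k,d) over {0,...,min(k,n-k)} satisfies d* ≤ d ≤ d* + 1, where d* = (k(n-k)-1)/(n+2) as a rational number. -/

import Mathlib

/-!
The ratio of consecutive terms of `d ↦ C(a,d)·C(b,d)` is `(a-d)(b-d)/(d+1)²`. At a maximizer `d`
the ratio into `d + 1` is at most `1` and the ratio into `d` from `d - 1` is at least `1`.
In both inequalities the `d²` terms cancel, and with `a + b = n` they become `ab - 1 ≤ d(n+2)`
and `d(n+2) ≤ ab + n + 1`.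
-/

namespace Nat

theorem choose_mul_choose_succ_mul_sq (a b d : ℕ) :
    a.choose (d + 1) * b.choose (d + 1) * (d + 1) ^ 2
      = a.choose d * b.choose d * ((a - d) * (b - d)) := by
  calc a.choose (d + 1) * b.choose (d + 1) * (d + 1) ^ 2
      = (a.choose (d + 1) * (d + 1)) * (b.choose (d + 1) * (d + 1)) := by ring
    _ = (a.choose d * (a - d)) * (b.choose d * (b - d)) := by
        rw [choose_succ_right_eq, choose_succ_right_eq]
    _ = a.choose d * b.choose d * ((a - d) * (b - d)) := by ring

theorem choose_mul_choose_eq_zero_of_min_lt {a b e : ℕ} (h : min a b < e) :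
    a.choose e * b.choose e = 0 := by
  rcases min_lt_iff.mp h with ha | hb
  · simp [choose_eq_zero_of_lt ha]
  · simp [choose_eq_zero_of_lt hb]

theorem sub_mul_sub_le_sq_of_choose_mul_choose_succ_le {a b d : ℕ}
    (hpos : 0 < a.choose d * b.choose d)
    (h : a.choose (d + 1) * b.choose (d + 1) ≤ a.choose d * b.choose d) :
    (a - d) * (b - d) ≤ (d + 1) ^ 2 := by
  refine le_of_mul_le_mul_left ?_ hpos
  rw [← choose_mul_choose_succ_mul_sq]
  exact Nat.mul_le_mul_right _ h

theorem sq_le_sub_mul_sub_of_choose_mul_choose_le_succ {a b d : ℕ}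
    (hpos : 0 < a.choose (d + 1) * b.choose (d + 1))
    (h : a.choose d * b.choose d ≤ a.choose (d + 1) * b.choose (d + 1)) :
    (d + 1) ^ 2 ≤ (a - d) * (b - d) := by
  refine le_of_mul_le_mul_left ?_ hpos
  rw [choose_mul_choose_succ_mul_sq]
  exact Nat.mul_le_mul_right _ h

theorem le_of_sub_mul_sub_le_sq {a b d : ℕ} (ha : d ≤ a) (hb : d ≤ b)
    (h : (a - d) * (b - d) ≤ (d + 1) ^ 2) :
    ((a : ℚ) * b - 1) / (a + b + 2) ≤ d := by
  have hq : ((a : ℚ) - d) * (b - d) ≤ (d + 1) ^ 2 := by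
    rw [← Nat.cast_sub ha, ← Nat.cast_sub hb]
    exact_mod_cast h
  rw [div_le_iff₀ (by positivity)]
  linarith

theorem le_add_one_of_sq_le_sub_mul_sub {a b d : ℕ} (h : (d + 1) ^ 2 ≤ (a - d) * (b - d)) :
    ((d + 1 : ℕ) : ℚ) ≤ ((a : ℚ) * b - 1) / (a + b + 2) + 1 := by
  have ha : d ≤ a := by
    by_contra! ha
    simp [Nat.sub_eq_zero_of_le ha.le] at h
  have hb : d ≤ b := by
    by_contra! hb
    simp [Nat.sub_eq_zero_of_le hb.le] at h
  have hq : ((d : ℚ) + 1) ^ 2 ≤ (a - d) * (b - d) := by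
    rw [← Nat.cast_sub ha, ← Nat.cast_sub hb]
    exact_mod_cast h
  have hpos : (0 : ℚ) < a + b + 2 := by positivity
  rw [div_add_one hpos.ne', le_div_iff₀ hpos]
  push_cast
  linarith

end Nat

theorem maximizer_location_general (n k : ℕ) (hk2 : k ≤ n - 1)
    (d : ℕ) (hd : d ≤ min k (n - k))
    (hmax : ∀ e ≤ min k (n - k),
      Nat.choose k e * Nat.choose (n - k) e ≤ Nat.choose k d * Nat.choose (n - k) d) :
    ((k : ℚ) * ((n : ℚ) - k) - 1) / ((n : ℚ) + 2) ≤ (d : ℚ)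
      ∧ (d : ℚ) ≤ ((k : ℚ) * ((n : ℚ) - k) - 1) / ((n : ℚ) + 2) + 1 := by
  have hkn : k ≤ n := by omega
  have hdk : d ≤ k := hd.trans (min_le_left _ _)
  have hdnk : d ≤ n - k := hd.trans (min_le_right _ _)
  have hdesc : k.choose (d + 1) * (n - k).choose (d + 1) ≤ k.choose d * (n - k).choose d := by
    by_cases h : d + 1 ≤ min k (n - k)
    · exact hmax _ h
    · rw [Nat.choose_mul_choose_eq_zero_of_min_lt (not_le.mp h)]
      exact Nat.zero_le _
  have hpos : 0 < k.choose d * (n - k).choose d :=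
    Nat.mul_pos (Nat.choose_pos hdk) (Nat.choose_pos hdnk)
  have hn_cast : (n : ℚ) = k + ((n - k : ℕ) : ℚ) := by push_cast [Nat.cast_sub hkn]; ring
  rw [hn_cast, add_sub_cancel_left]
  refine ⟨Nat.le_of_sub_mul_sub_le_sq hdk hdnk
    (Nat.sub_mul_sub_le_sq_of_choose_mul_choose_succ_le hpos hdesc), ?_⟩
  rcases d with _ | e
  · rw [div_add_one (by positivity), Nat.cast_zero]
    refine div_nonneg ?_ (by positivity)
    have : (0 : ℚ) ≤ k * ((n - k : ℕ) : ℚ) := by positivity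
    linarith
  · exact Nat.le_add_one_of_sq_le_sub_mul_sub
      (Nat.sq_le_sub_mul_sub_of_choose_mul_choose_le_succ hpos (hmax e (by omega)))

theorem maximizer_location (n k : ℕ) (hn : 3 ≤ n) (hk1 : 1 ≤ k) (hk2 : k ≤ n - 1)
    (d : ℕ) (hd : d ≤ min k (n - k))
    (hmax : ∀ e ≤ min k (n - k),
      Nat.choose k e * Nat.choose (n - k) e ≤ Nat.choose k d * Nat.choose (n - k) d) :
    ((k : ℚ) * ((n : ℚ) - k) - 1) / ((n : ℚ) + 2) ≤ (d : ℚ)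
      ∧ (d : ℚ) ≤ ((k : ℚ) * ((n : ℚ) - k) - 1) / ((n : ℚ) + 2) + 1 :=
  maximizer_location_general n k hk2 d hd hmax
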